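/- Every one-dimensional central extension of F_n^1 given by the cocycle data (α_1, α_2, α_3, α_4) with α_2 = 0 and α_1 ≠ 0, α_4 = 0 (multiplication: [e_i,e_1]=e_{i+1} for 1 ≤ i ≤ n-2, [e_n,e_1] = e_2 + α_1 e_{n+1}, [e_1,e_n] = α_3 e_{n+1}) is isomorphic to the algebra L_{n+1}^{3,λ} for some λ ∈ {-1,0,1}, where L_m^{3,λ} has products [e_i,e_1]=e_{i+1} (1 ≤ i ≤ m-3), [e_{m-1},e_1]=e_m+e_2, [e_1,e_{m-1}]=λ e_m. -/

import Mathlib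

/-- The `(n+1)`-dimensional algebra `E(α_1,α_3)` with products
`[e_i,e_1]=e_{i+1}` for `1 ≤ i ≤ n-2`, `[e_n,e_1]=e_2+α_1 e_{n+1}`,
`[e_1,e_n]=α_3 e_{n+1}`, other products zero.  Note `E(1,λ) = L_{n+1}^{3,λ}`. -/
def Emul (n : ℕ) (hn : 4 ≤ n) (α1 α3 : ℂ) (x y : Fin (n+1) → ℂ) :
    Fin (n+1) → ℂ :=
  fun k =>
    if h : (k : ℕ) = 1 then
      x ⟨0, by omega⟩ * y ⟨0, by omega⟩ + x ⟨n - 1, by omega⟩ * y ⟨0, by omega⟩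
    else if h2 : 2 ≤ (k : ℕ) ∧ (k : ℕ) ≤ n - 2 then
      x ⟨(k : ℕ) - 1, by have := k.isLt; omega⟩ * y ⟨0, by omega⟩
    else if h3 : (k : ℕ) = n then
      α1 * (x ⟨n - 1, by omega⟩ * y ⟨0, by omega⟩) +
        α3 * (x ⟨0, by omega⟩ * y ⟨n - 1, by omega⟩)
    else 0

/-!
Change basis by `f_1 = a e_1 + b e_n`, `f_2 = a s e_2 + c e_{n+1}`, `f_i = a^{i-1} s e_i`
(`3 ≤ i ≤ n-1`), `f_n = s e_n`, `f_{n+1} = d e_{n+1}`. With `s = a + b`,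
`c = ab(α_1 + α_3)` and `d = a(aα_1 - bα_3)` the products of `E(α_1, α_3)` in the new basis are
those of `E(1, λ)` as soon as `λ (aα_1 - bα_3) = (a + b) α_3`. This equation has a
solution with `a, a + b, aα_1 - bα_3 ≠ 0` and `λ = 0` if `α_3 = 0`, with `λ = -1` if
`α_1 + α_3 = 0`, and with `λ = 1`, `a = 2α_3`, `b = α_1 - α_3` otherwise.
-/

theorem LinearEquiv.symm_map_of_map {R M N : Type*} [Semiring R] [AddCommMonoid M]
    [AddCommMonoid N] [Module R M] [Module R N] (e : M ≃ₗ[R] N) {μ : M → M → M}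
    {ν : N → N → N} (h : ∀ u v, e (μ u v) = ν (e u) (e v)) (x y : N) :
    e.symm (ν x y) = μ (e.symm x) (e.symm y) := by
  rw [e.symm_apply_eq, h, e.apply_symm_apply, e.apply_symm_apply]

theorem Fin.val_eq_zero_or_one_or_mid_or_pred_or_last {n : ℕ} (k : Fin (n + 1)) :
    (k : ℕ) = 0 ∨ (k : ℕ) = 1 ∨ (2 ≤ (k : ℕ) ∧ (k : ℕ) ≤ n - 2) ∨ (k : ℕ) = n - 1 ∨
      (k : ℕ) = n := by
  omega

theorem exists_normalizing_params {α1 α3 : ℂ} (hα1 : α1 ≠ 0) :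
    ∃ a b lam : ℂ, lam ∈ ({-1, 0, 1} : Set ℂ) ∧ a ≠ 0 ∧ a + b ≠ 0 ∧
      a * α1 - b * α3 ≠ 0 ∧ lam * (a * α1 - b * α3) = (a + b) * α3 := by
  by_cases h3 : α3 = 0
  · exact ⟨1, 0, 0, by simp, one_ne_zero, by norm_num, by simpa using hα1, by simp [h3]⟩
  by_cases hsum : α1 + α3 = 0
  · exact ⟨1, 0, -1, by simp, one_ne_zero, by norm_num, by simpa using hα1,
      by linear_combination -hsum⟩
  refine ⟨2 * α3, α1 - α3, 1, by simp, mul_ne_zero two_ne_zero h3, ?_, ?_, by ring⟩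
  · exact fun h => hsum (by linear_combination h)
  · have : 2 * α3 * α1 - (α1 - α3) * α3 = α3 * (α1 + α3) := by ring
    rw [this]
    exact mul_ne_zero h3 hsum

section

variable {n : ℕ} (hn : 4 ≤ n)

section Emul

variable {α1 α3 : ℂ} (x y : Fin (n + 1) → ℂ) (k : Fin (n + 1))

theorem Emul_apply_of_val_eq_zero_or (h : (k : ℕ) = 0 ∨ (k : ℕ) = n - 1) :
    Emul n hn α1 α3 x y k = 0 := by
  simp only [Emul]
  rw [dif_neg (by omega), dif_neg (by omega), dif_neg (by omega)]

theorem Emul_apply_of_val_eq_one (h : (k : ℕ) = 1) :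
    Emul n hn α1 α3 x y k =
      x ⟨0, by omega⟩ * y ⟨0, by omega⟩ + x ⟨n - 1, by omega⟩ * y ⟨0, by omega⟩ := by
  simp only [Emul]
  rw [dif_pos h]

theorem Emul_apply_of_two_le_val (h₁ : 2 ≤ (k : ℕ)) (h₂ : (k : ℕ) ≤ n - 2) :
    Emul n hn α1 α3 x y k = x ⟨(k : ℕ) - 1, by omega⟩ * y ⟨0, by omega⟩ := by
  simp only [Emul]
  rw [dif_neg (by omega), dif_pos ⟨h₁, h₂⟩]

theorem Emul_apply_of_val_eq_last (h : (k : ℕ) = n) :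
    Emul n hn α1 α3 x y k =
      α1 * (x ⟨n - 1, by omega⟩ * y ⟨0, by omega⟩) +
        α3 * (x ⟨0, by omega⟩ * y ⟨n - 1, by omega⟩) := by
  simp only [Emul]
  rw [dif_neg (by omega), dif_neg (by omega), dif_pos h]

end Emul

/-- Sends the coordinates of a vector in the basis `f` of the header to its coordinates in the
basis `e`; coordinates are 0-indexed, so `x k` is the coefficient of `f_{k+1}`. -/
def basisChange (a s b c d : ℂ) : (Fin (n + 1) → ℂ) →ₗ[ℂ] (Fin (n + 1) → ℂ) where
  toFun x k :=
    if (k : ℕ) = 0 then a * x k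
    else if (k : ℕ) ≤ n - 2 then a ^ (k : ℕ) * s * x k
    else if (k : ℕ) = n - 1 then b * x ⟨0, by omega⟩ + s * x k
    else c * x ⟨1, by omega⟩ + d * x k
  map_add' x y := by
    funext k
    simp only [Pi.add_apply]
    split_ifs <;> ring
  map_smul' r x := by
    funext k
    simp only [Pi.smul_apply, smul_eq_mul, RingHom.id_apply]
    split_ifs <;> ring

section basisChange

variable {a s b c d : ℂ} (x : Fin (n + 1) → ℂ) (k : Fin (n + 1))

theorem basisChange_apply_of_val_eq_zero (h : (k : ℕ) = 0) :
    basisChange hn a s b c d x k = a * x k := by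
  simp only [basisChange, LinearMap.coe_mk, AddHom.coe_mk]
  rw [if_pos h]

theorem basisChange_apply_of_val_le (h₁ : (k : ℕ) ≠ 0) (h₂ : (k : ℕ) ≤ n - 2) :
    basisChange hn a s b c d x k = a ^ (k : ℕ) * s * x k := by
  simp only [basisChange, LinearMap.coe_mk, AddHom.coe_mk]
  rw [if_neg h₁, if_pos h₂]

theorem basisChange_apply_of_val_eq_pred (h : (k : ℕ) = n - 1) :
    basisChange hn a s b c d x k = b * x ⟨0, by omega⟩ + s * x k := by
  simp only [basisChange, LinearMap.coe_mk, AddHom.coe_mk]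
  rw [if_neg (by omega), if_neg (by omega), if_pos h]

theorem basisChange_apply_of_val_eq_last (h : (k : ℕ) = n) :
    basisChange hn a s b c d x k = c * x ⟨1, by omega⟩ + d * x k := by
  simp only [basisChange, LinearMap.coe_mk, AddHom.coe_mk]
  rw [if_neg (by omega), if_neg (by omega), if_neg (by omega)]

theorem basisChange_injective (ha : a ≠ 0) (hs : s ≠ 0) (hd : d ≠ 0) :
    Function.Injective (basisChange hn a s b c d) := by
  rw [← LinearMap.ker_eq_bot, LinearMap.ker_eq_bot']
  intro x hx
  have hk (k : Fin (n + 1)) : basisChange hn a s b c d x k = 0 := congrFun hx k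
  have hmid (k : Fin (n + 1)) (h₁ : (k : ℕ) ≠ 0) (h₂ : (k : ℕ) ≤ n - 2) : x k = 0 := by
    have := hk k
    rwa [basisChange_apply_of_val_le hn x k h₁ h₂, mul_eq_zero,
      or_iff_right (mul_ne_zero (pow_ne_zero _ ha) hs)] at this
  have h₀ : x ⟨0, by omega⟩ = 0 := by
    have := hk ⟨0, by omega⟩
    rwa [basisChange_apply_of_val_eq_zero hn x _ rfl, mul_eq_zero, or_iff_right ha] at this
  have h₁ : x ⟨1, by omega⟩ = 0 := hmid _ one_ne_zero (by simp only; omega)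
  funext k
  have := hk k
  rcases Fin.val_eq_zero_or_one_or_mid_or_pred_or_last k with h | h | ⟨h, h'⟩ | h | h
  · rwa [basisChange_apply_of_val_eq_zero hn x k h, mul_eq_zero, or_iff_right ha] at this
  · exact hmid k (by omega) (by omega)
  · exact hmid k (by omega) h'
  · rwa [basisChange_apply_of_val_eq_pred hn x k h, h₀, mul_zero, zero_add, mul_eq_zero,
      or_iff_right hs] at this
  · rwa [basisChange_apply_of_val_eq_last hn x k h, h₁, mul_zero, zero_add, mul_eq_zero,
      or_iff_right hd] at this

end basisChange

theorem basisChange_Emul {α1 α3 lam a s b c d : ℂ} (hs : s = a + b)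
    (hc : c = a * b * (α1 + α3)) (hd : c + d = a * s * α1) (hlam : lam * d = a * s * α3)
    (x y : Fin (n + 1) → ℂ) :
    basisChange hn a s b c d (Emul n hn 1 lam x y) =
      Emul n hn α1 α3 (basisChange hn a s b c d x) (basisChange hn a s b c d y) := by
  set G := basisChange hn a s b c d
  have hx₀ : G x ⟨0, by omega⟩ = a * x ⟨0, by omega⟩ :=
    basisChange_apply_of_val_eq_zero hn x _ rfl
  have hy₀ : G y ⟨0, by omega⟩ = a * y ⟨0, by omega⟩ :=
    basisChange_apply_of_val_eq_zero hn y _ rfl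
  have hx₁ : G x ⟨n - 1, by omega⟩ = b * x ⟨0, by omega⟩ + s * x ⟨n - 1, by omega⟩ :=
    basisChange_apply_of_val_eq_pred hn x _ rfl
  have hy₁ : G y ⟨n - 1, by omega⟩ = b * y ⟨0, by omega⟩ + s * y ⟨n - 1, by omega⟩ :=
    basisChange_apply_of_val_eq_pred hn y _ rfl
  funext k
  rcases Fin.val_eq_zero_or_one_or_mid_or_pred_or_last k with h | h | ⟨h, h'⟩ | h | h
  · rw [basisChange_apply_of_val_eq_zero hn _ k h,
      Emul_apply_of_val_eq_zero_or hn _ _ k (.inl h),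
      Emul_apply_of_val_eq_zero_or hn _ _ k (.inl h), mul_zero]
  · rw [basisChange_apply_of_val_le hn _ k (by omega) (by omega),
      Emul_apply_of_val_eq_one hn _ _ k h, Emul_apply_of_val_eq_one hn _ _ k h,
      hx₀, hy₀, hx₁, h, pow_one]
    linear_combination a * x ⟨0, by omega⟩ * y ⟨0, by omega⟩ * hs
  · have hx : G x ⟨k - 1, by omega⟩ = a ^ ((k : ℕ) - 1) * s * x ⟨k - 1, by omega⟩ :=
      basisChange_apply_of_val_le hn x _ (by simp only; omega) (by simp only; omega)
    have hpow : a ^ (k : ℕ) = a ^ ((k : ℕ) - 1) * a := by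
      rw [← pow_succ, Nat.sub_add_cancel (by omega)]
    rw [basisChange_apply_of_val_le hn _ k (by omega) h', Emul_apply_of_two_le_val hn _ _ k h h',
      Emul_apply_of_two_le_val hn _ _ k h h', hx, hy₀, hpow]
    ring
  · rw [basisChange_apply_of_val_eq_pred hn _ k h, Emul_apply_of_val_eq_zero_or hn _ _ k (.inr h),
      Emul_apply_of_val_eq_zero_or hn _ _ k (.inr h),
      Emul_apply_of_val_eq_zero_or hn _ _ _ (.inl rfl), mul_zero, mul_zero, add_zero]
  · rw [basisChange_apply_of_val_eq_last hn _ k h, Emul_apply_of_val_eq_last hn _ _ k h,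
      Emul_apply_of_val_eq_last hn _ _ k h, Emul_apply_of_val_eq_one hn _ _ _ rfl,
      hx₀, hy₀, hx₁, hy₁]
    linear_combination x ⟨0, by omega⟩ * y ⟨0, by omega⟩ * hc +
      x ⟨n - 1, by omega⟩ * y ⟨0, by omega⟩ * hd + x ⟨0, by omega⟩ * y ⟨n - 1, by omega⟩ * hlam

end

/-- Every one-dimensional central extension of `F_n^1` with cocycle data
`α_2 = 0`, `α_1 ≠ 0`, `α_4 = 0` is isomorphic to `L_{n+1}^{3,λ}` for some
`λ ∈ {-1,0,1}`. -/
theorem ext_iso_L3 (n : ℕ) (hn : 4 ≤ n) (α1 α3 : ℂ) (hα1 : α1 ≠ 0) :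
    ∃ lam ∈ ({-1, 0, 1} : Set ℂ),
      ∃ f : (Fin (n+1) → ℂ) ≃ₗ[ℂ] (Fin (n+1) → ℂ),
        ∀ x y, f (Emul n hn α1 α3 x y) = Emul n hn 1 lam (f x) (f y) := by
  obtain ⟨a, b, lam, hlam, ha, hs, hd, hkey⟩ := exists_normalizing_params (α3 := α3) hα1
  let G := LinearEquiv.ofInjectiveEndo _
    (basisChange_injective hn (b := b) (c := a * b * (α1 + α3)) ha hs (mul_ne_zero ha hd))
  refine ⟨lam, hlam, G.symm, G.symm_map_of_map fun x y => ?_⟩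
  exact basisChange_Emul hn rfl rfl (by ring) (by linear_combination a * hkey) x y
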